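/- Let F = 𝔽_q be a finite field, K = 𝔽_{q^m} a degree-m extension, and G a finite group. Let C ≤ KG be a left ideal of the group algebra KG. Then C is Euclidean LCD (i.e. C ∩ C^⊥_E = {0} with respect to the Euclidean form) if and only if C = KGe for some idempotent e ∈ KG with e = e*, where * is the involution of KG induced by inversion in G. -/

import Mathlib

/-!
The Euclidean form is `⟨x, y⟩_E = (x y*)_1`, so for a left ideal `C` an element `x` lies in
`C^⊥_E` iff `x c* = 0` for all `c ∈ C`. If `C ∩ C^⊥_E = 0`, a dimension count gives
`KG = C ⊕ C^⊥_E`; write `1 = e + f`. For `x ∈ C` the element `x f = x - x e` lies in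
`C ∩ C^⊥_E`, so `x e = x`: thus `e` is an idempotent generator of `C`, and `f e* = 0` gives
`e* = e e*`; starring gives `e = e e* = e*`. Conversely, if `C = KGe` with `e² = e = e*`, then
`x ∈ C ∩ C^⊥_E` gives `x = x e = x e* = 0`.
-/

open MonoidAlgebra

/-- The trace-Euclidean form on the group algebra `KG`:
`⟨x,y⟩_TE = Tr_{K/F}(Σ_{g∈G} x_g y_g)`. -/
noncomputable def TE (F : Type) {K G : Type} [Field F] [Field K] [Algebra F K]
    [Fintype G] (x y : MonoidAlgebra K G) : F :=
  Algebra.trace F K (∑ g : G, x.coeff g * y.coeff g)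

/-- The involution of `KG` induced by inversion in `G`:
`(Σ a_g g)* = Σ a_g g⁻¹`, i.e. the coefficient of `g` in `a*` is `a (g⁻¹)`. -/
def starG {K G : Type} [Semiring K] [Group G] (a : MonoidAlgebra K G) : MonoidAlgebra K G :=
  MonoidAlgebra.ofCoeff (Finsupp.equivMapDomain (Equiv.inv G) a.coeff)

theorem Ideal.eq_span_singleton_of_mul_eq_self {R : Type*} [Semiring R] {C : Ideal R} {e : R}
    (he : e ∈ C) (hmul : ∀ x ∈ C, x * e = x) : C = Ideal.span {e} := by
  refine le_antisymm (fun x hx => ?_) (Ideal.span_le.mpr (Set.singleton_subset_iff.mpr he))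
  exact Ideal.mem_span_singleton'.mpr ⟨x, hmul x hx⟩

theorem Ideal.mul_eq_self_of_mem_span_idempotent {R : Type*} [Semiring R] {e x : R}
    (hee : e * e = e) (hx : x ∈ Ideal.span {e}) : x * e = x := by
  obtain ⟨a, rfl⟩ := Ideal.mem_span_singleton'.mp hx
  rw [mul_assoc, hee]

section Involution

variable {K G : Type} [Group G]

@[simp]
theorem coeff_starG [Semiring K] (a : MonoidAlgebra K G) (g : G) :
    (starG a).coeff g = a.coeff g⁻¹ := rfl

@[simp]
theorem starG_starG [Semiring K] (a : MonoidAlgebra K G) : starG (starG a) = a := by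
  ext g; simp

theorem starG_add [Semiring K] (a b : MonoidAlgebra K G) : starG (a + b) = starG a + starG b := by
  ext g; simp

@[simp]
theorem starG_zero [Semiring K] : starG (0 : MonoidAlgebra K G) = 0 := by
  ext g; simp

theorem starG_single [Semiring K] (g : G) (r : K) : starG (single g r) = single g⁻¹ r := by
  classical
  ext h
  simp [coeff_single, Finsupp.single_apply, inv_eq_iff_eq_inv]

theorem starG_mul [CommSemiring K] (a b : MonoidAlgebra K G) :
    starG (a * b) = starG b * starG a := by
  induction a using MonoidAlgebra.induction_linear with
  | zero => rw [zero_mul, starG_zero, mul_zero]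
  | add x y hx hy => rw [add_mul, starG_add, hx, hy, starG_add, mul_add]
  | single g r =>
    induction b using MonoidAlgebra.induction_linear with
    | zero => rw [mul_zero, starG_zero, zero_mul]
    | add x y hx hy => rw [mul_add, starG_add, hx, hy, starG_add, add_mul]
    | single h s =>
      rw [single_mul_single, starG_single, starG_single, starG_single, single_mul_single,
        mul_inv_rev, mul_comm s r]

theorem starG_eq_self_of_starG_eq_mul [CommSemiring K] {e : MonoidAlgebra K G}
    (h : starG e = e * starG e) : starG e = e :=
  calc starG e = starG (e * starG e) := by rw [starG_mul, starG_starG, ← h]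
    _ = e := by rw [← h, starG_starG]

end Involution

noncomputable def euclideanForm (K G : Type) [CommSemiring K] [Group G] [Fintype G] :
    LinearMap.BilinForm K (MonoidAlgebra K G) :=
  LinearMap.mk₂ K (fun x y => ∑ g : G, x.coeff g * y.coeff g)
    (fun _ _ _ => by
      simp only [coeff_add, Finsupp.add_apply, add_mul, Finset.sum_add_distrib])
    (fun _ _ _ => by
      simp only [coeff_smul, Finsupp.smul_apply, smul_eq_mul, Finset.mul_sum, mul_assoc])
    (fun _ _ _ => by
      simp only [coeff_add, Finsupp.add_apply, mul_add, Finset.sum_add_distrib])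
    (fun _ _ _ => by
      simp only [coeff_smul, Finsupp.smul_apply, smul_eq_mul, Finset.mul_sum, mul_left_comm])

section Euclidean

variable {K G : Type} [Group G] [Fintype G]

theorem sum_coeff_mul_coeff_eq_coeff_mul_starG [Semiring K] (x y : MonoidAlgebra K G) :
    ∑ g : G, x.coeff g * y.coeff g = (x * starG y).coeff 1 := by
  rw [coeff_mul_apply_left, Finsupp.sum_fintype _ _ (by simp)]
  simp

variable [CommSemiring K]

theorem euclideanForm_apply (x y : MonoidAlgebra K G) :
    euclideanForm K G x y = ∑ g : G, x.coeff g * y.coeff g := rfl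

theorem euclideanForm_comm (x y : MonoidAlgebra K G) :
    euclideanForm K G x y = euclideanForm K G y x := by
  simp only [euclideanForm_apply, mul_comm]

theorem euclideanForm_isRefl : (euclideanForm K G).IsRefl := fun x y h => by
  rwa [euclideanForm_comm]

noncomputable def euclideanDual (C : Ideal (MonoidAlgebra K G)) :
    Submodule K (MonoidAlgebra K G) :=
  (euclideanForm K G).orthogonal (C.restrictScalars K)

theorem coe_euclideanDual (C : Ideal (MonoidAlgebra K G)) :
    (euclideanDual C : Set (MonoidAlgebra K G)) =
      {x | ∀ c ∈ C, ∑ g : G, x.coeff g * c.coeff g = 0} := by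
  ext x
  simp only [SetLike.mem_coe, euclideanDual, LinearMap.BilinForm.mem_orthogonal_iff,
    euclideanForm_comm _ x, euclideanForm_apply, Submodule.restrictScalars_mem, Set.mem_ofPred_eq]

/-- The coefficient of `h` in `x c*` is `⟨x, h c⟩_E`, and `h c ∈ C` as `C` is a left ideal. -/
theorem mem_euclideanDual_iff_mul_starG_eq_zero {C : Ideal (MonoidAlgebra K G)}
    {x : MonoidAlgebra K G} : x ∈ euclideanDual C ↔ ∀ c ∈ C, x * starG c = 0 := by
  rw [← SetLike.mem_coe, coe_euclideanDual]
  refine ⟨fun hx c hc => ?_, fun hx c hc => ?_⟩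
  · ext h
    have hmem : single h 1 * c ∈ C := C.mul_mem_left _ hc
    have := hx _ hmem
    rwa [sum_coeff_mul_coeff_eq_coeff_mul_starG, starG_mul, starG_single, ← mul_assoc,
      coeff_mul_single_apply, one_mul, inv_inv, mul_one] at this
  · rw [sum_coeff_mul_coeff_eq_coeff_mul_starG, hx c hc]
    rfl

end Euclidean

section LCD

variable {K G : Type} [Group G] [Fintype G]

theorem coe_inter_euclideanDual_eq_zero_iff_disjoint [CommSemiring K]
    {C : Ideal (MonoidAlgebra K G)} :
    (C : Set (MonoidAlgebra K G)) ∩ euclideanDual C = {0} ↔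
      Disjoint (C.restrictScalars K) (euclideanDual C) := by
  rw [disjoint_iff, ← SetLike.coe_set_eq (p := _ ⊓ _), Submodule.coe_inf,
    Submodule.coe_restrictScalars, Submodule.bot_coe]

theorem mul_eq_self_of_add_eq_one [CommRing K] {C : Ideal (MonoidAlgebra K G)}
    (hdisj : Disjoint (C.restrictScalars K) (euclideanDual C)) {e f : MonoidAlgebra K G}
    (he : e ∈ C) (hf : f ∈ euclideanDual C) (hef : e + f = 1) {x : MonoidAlgebra K G}
    (hx : x ∈ C) : x * e = x := by
  have hxfC : x * f ∈ C := by
    rw [eq_sub_of_add_eq' hef, mul_sub, mul_one]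
    exact C.sub_mem hx (C.mul_mem_left x he)
  have hxfDual : x * f ∈ euclideanDual C :=
    mem_euclideanDual_iff_mul_starG_eq_zero.mpr fun c hc => by
      rw [mul_assoc, mem_euclideanDual_iff_mul_starG_eq_zero.mp hf c hc, mul_zero]
  have hxf : x * f = 0 := Submodule.disjoint_def.mp hdisj _ hxfC hxfDual
  rw [← add_zero (x * e), ← hxf, ← mul_add, hef, mul_one]

theorem exists_selfadjoint_idempotent_of_disjoint [Field K] {C : Ideal (MonoidAlgebra K G)}
    (hdisj : Disjoint (C.restrictScalars K) (euclideanDual C)) :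
    ∃ e : MonoidAlgebra K G, e * e = e ∧ starG e = e ∧ C = Ideal.span {e} := by
  have hcompl : IsCompl (C.restrictScalars K) (euclideanDual C) :=
    (LinearMap.BilinForm.isCompl_orthogonal_iff_disjoint euclideanForm_isRefl).mpr hdisj
  obtain ⟨e, he, f, hf, hef⟩ :=
    Submodule.mem_sup.mp (hcompl.sup_eq_top ▸ Submodule.mem_top : (1 : MonoidAlgebra K G) ∈ _)
  have hmul : ∀ x ∈ C, x * e = x := fun x hx => mul_eq_self_of_add_eq_one hdisj he hf hef hx
  have hfe : f * starG e = 0 := mem_euclideanDual_iff_mul_starG_eq_zero.mp hf e he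
  rw [eq_sub_of_add_eq' hef, sub_mul, one_mul, sub_eq_zero] at hfe
  exact ⟨e, hmul e he, starG_eq_self_of_starG_eq_mul hfe,
    Ideal.eq_span_singleton_of_mul_eq_self he hmul⟩

theorem disjoint_euclideanDual_span_of_idempotent [CommSemiring K] {e : MonoidAlgebra K G}
    (hee : e * e = e) (hse : starG e = e) :
    Disjoint ((Ideal.span {e}).restrictScalars K) (euclideanDual (Ideal.span {e})) :=
  Submodule.disjoint_def.mpr fun x hx hxDual =>
    calc x = x * e := (Ideal.mul_eq_self_of_mem_span_idempotent hee hx).symm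
      _ = 0 := by
        rw [← hse]
        exact mem_euclideanDual_iff_mul_starG_eq_zero.mp hxDual e (Ideal.mem_span_singleton_self e)

end LCD

theorem euclidean_lcd_iff_selfadjoint_idempotent_general
    (K G : Type) [Field K] [Group G] [Fintype G]
    (C : Ideal (MonoidAlgebra K G)) :
    ((C : Set (MonoidAlgebra K G)) ∩
        {x | ∀ c ∈ C, (∑ g : G, x.coeff g * c.coeff g) = 0} = {0}) ↔
    (∃ e : MonoidAlgebra K G, e * e = e ∧ starG e = e ∧ C = Ideal.span {e}) := by
  rw [← coe_euclideanDual, coe_inter_euclideanDual_eq_zero_iff_disjoint]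
  refine ⟨exists_selfadjoint_idempotent_of_disjoint, ?_⟩
  rintro ⟨e, hee, hse, rfl⟩
  exact disjoint_euclideanDual_span_of_idempotent hee hse

/-- A left ideal `C` of `KG` is Euclidean LCD (`C ∩ C^⊥_E = {0}`) if and only if
`C = KGe` for some idempotent `e ∈ KG` with `e = e*`, where `*` is the
involution induced by inversion in `G`. -/
theorem euclidean_lcd_iff_selfadjoint_idempotent
    (F K G : Type) [Field F] [Fintype F] [Field K] [Fintype K] [Algebra F K]
    [FiniteDimensional F K] [Group G] [Fintype G]
    (C : Ideal (MonoidAlgebra K G)) :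
    ((C : Set (MonoidAlgebra K G)) ∩
        {x | ∀ c ∈ C, (∑ g : G, x.coeff g * c.coeff g) = 0} = {0}) ↔
    (∃ e : MonoidAlgebra K G, e * e = e ∧ starG e = e ∧ C = Ideal.span {e}) :=
  euclidean_lcd_iff_selfadjoint_idempotent_general K G C
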